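/- arXiv:1903.04854 — 3 statements merged into one kernel-verified Lean document; each statement's English description precedes it below -/
import Mathlib

section
/- Let E be a Banach lattice and X a Banach space. If T : E → X is a continuous operator such that Tx_n → 0 in norm for every disjoint sequence (x_n) in E, and the modulus |T| exists, then the carrier C_T = {x ∈ E : |T|(|x|) = 0}^d of T contains no infinite disjoint sequence of nonzero positive vectors. -/
open Filter Topology Bornology

/-- A sequence in a normed lattice is unbounded-norm (un-) null if `‖ |xₙ| ⊓ u ‖ → 0`
for every positive `u`. -/
def UnNullSeq {G : Type*} [NormedAddCommGroup G] [Lattice G] [HasSolidNorm G] [IsOrderedAddMonoid G] (x : ℕ → G) : Prop :=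
  ∀ u : G, 0 ≤ u → Tendsto (fun n => ‖|x n| ⊓ u‖) atTop (𝓝 0)

/-- A pairwise disjoint sequence. -/
def DisjointSeq {G : Type*} [NormedAddCommGroup G] [Lattice G] [HasSolidNorm G] [IsOrderedAddMonoid G] (x : ℕ → G) : Prop :=
  Pairwise fun n m => |x n| ⊓ |x m| = 0

/-- A norm bounded sequence. -/
def NormBddSeq {G : Type*} [NormedAddCommGroup G] [Lattice G] [HasSolidNorm G] [IsOrderedAddMonoid G] (x : ℕ → G) : Prop :=
  ∃ C : ℝ, ∀ n, ‖x n‖ ≤ C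

/-- The solid hull of a set. -/
def SolidHull {G : Type*} [NormedAddCommGroup G] [Lattice G] [HasSolidNorm G] [IsOrderedAddMonoid G] (A : Set G) : Set G :=
  {x | ∃ y ∈ A, |x| ≤ |y|}

/-- A bounded set is L-weakly compact if every disjoint sequence in its solid hull is
norm null. -/
def LWCSet {G : Type*} [NormedAddCommGroup G] [Lattice G] [HasSolidNorm G] [IsOrderedAddMonoid G] (A : Set G) : Prop :=
  IsBounded A ∧ ∀ x : ℕ → G, (∀ n, x n ∈ SolidHull A) → DisjointSeq x →
    Tendsto (fun n => ‖x n‖) atTop (𝓝 0)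

/-- The norm is order continuous: every net decreasing to `0` is norm null. -/
def OrderContNorm (G : Type*) [NormedAddCommGroup G] [Lattice G] [HasSolidNorm G] [IsOrderedAddMonoid G] : Prop :=
  ∀ (ι : Type) [SemilatticeSup ι] [Nonempty ι] (x : ι → G),
    Antitone x → IsGLB (Set.range x) 0 → Tendsto (fun i => ‖x i‖) atTop (𝓝 0)

/-- Dedekind σ-completeness: every bounded-above increasing sequence has a supremum. -/
def DedekindSigmaComplete (G : Type*) [NormedAddCommGroup G] [Lattice G] [HasSolidNorm G] [IsOrderedAddMonoid G] : Prop :=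
  ∀ x : ℕ → G, Monotone x → (∃ b, ∀ n, x n ≤ b) → ∃ s, IsLUB (Set.range x) s

/-- An atom of a Banach lattice. -/
def IsLatticeAtom {G : Type*} [NormedAddCommGroup G] [Lattice G] [HasSolidNorm G] [IsOrderedAddMonoid G] [NormedSpace ℝ G] (a : G) : Prop :=
  0 < a ∧ ∀ x : G, 0 ≤ x → x ≤ a → ∃ c : ℝ, x = c • a

/-- An atomic Banach lattice: every nonzero positive element dominates an atom. -/
def AtomicLattice (G : Type*) [NormedAddCommGroup G] [Lattice G] [HasSolidNorm G] [IsOrderedAddMonoid G] [NormedSpace ℝ G] : Prop :=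
  ∀ x : G, 0 < x → ∃ a, IsLatticeAtom a ∧ a ≤ x

/-- A realization of the Banach lattice `E'` as the topological dual of the Banach lattice
`E`: a linear isometric isomorphism onto `NormedSpace.Dual ℝ E` that identifies the order. -/
structure DualPairing (E E' : Type*) [NormedAddCommGroup E] [Lattice E] [HasSolidNorm E] [IsOrderedAddMonoid E] [NormedSpace ℝ E]
    [NormedAddCommGroup E'] [Lattice E'] [HasSolidNorm E'] [IsOrderedAddMonoid E'] [NormedSpace ℝ E'] where
  toDual : E' ≃ₗᵢ[ℝ] StrongDual ℝ E
  pos_iff : ∀ f : E', 0 ≤ f ↔ ∀ x : E, 0 ≤ x → 0 ≤ toDual f x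

section Pairing

variable {E E' : Type*} [NormedAddCommGroup E] [Lattice E] [HasSolidNorm E] [IsOrderedAddMonoid E] [NormedSpace ℝ E]
  [NormedAddCommGroup E'] [Lattice E'] [HasSolidNorm E'] [IsOrderedAddMonoid E'] [NormedSpace ℝ E']

/-- A bounded set `A ⊆ E` is weak L-weakly compact if `sup_{x ∈ A} |x'ₙ(x)| → 0` for every
norm bounded un-null sequence `(x'ₙ)` in the dual `E'`. -/
def WeakLWCSet (P : DualPairing E E') (A : Set E) : Prop :=
  IsBounded A ∧ ∀ f : ℕ → E', NormBddSeq f → UnNullSeq f →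
    Tendsto (fun n => ⨆ x ∈ A, |P.toDual (f n) x|) atTop (𝓝 0)

/-- A bounded set `B ⊆ E'` is weak* L-weakly compact if `sup_{x' ∈ B} |x'(xₙ)| → 0` for every
norm bounded un-null sequence `(xₙ)` in `E`. -/
def WeakStarLWCSet (P : DualPairing E E') (B : Set E') : Prop :=
  IsBounded B ∧ ∀ x : ℕ → E, NormBddSeq x → UnNullSeq x →
    Tendsto (fun n => ⨆ f ∈ B, |P.toDual f (x n)|) atTop (𝓝 0)

end Pairing

section Op

variable {E F X : Type*} [NormedAddCommGroup E] [Lattice E] [HasSolidNorm E] [IsOrderedAddMonoid E] [NormedSpace ℝ E]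
  [NormedAddCommGroup X] [NormedSpace ℝ X]

/-- `T : E → X` is M-weakly compact if `‖Txₙ‖ → 0` for every norm bounded disjoint
sequence in `E`. -/
def MWeaklyCompact (T : E →L[ℝ] X) : Prop :=
  ∀ x : ℕ → E, NormBddSeq x → DisjointSeq x → Tendsto (fun n => ‖T (x n)‖) atTop (𝓝 0)

/-- `T : E → X` is weak M-weakly compact if `‖Txₙ‖ → 0` for every un-null sequence in the
closed unit ball of `E`. -/
def WeakMWeaklyCompact (T : E →L[ℝ] X) : Prop :=
  ∀ x : ℕ → E, (∀ n, ‖x n‖ ≤ 1) → UnNullSeq x → Tendsto (fun n => ‖T (x n)‖) atTop (𝓝 0)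

/-- `T : X → E` is L-weakly compact if the image of the closed unit ball is an
L-weakly compact set. -/
def LWCOperator (T : X →L[ℝ] E) : Prop :=
  LWCSet (T '' Metric.closedBall 0 1)

/-- `T : X → E` is weak L-weakly compact if `sup_{x ∈ B_X} |fₙ(Tx)| → 0` for every norm
bounded un-null sequence `(fₙ)` in `E'`. -/
def WeakLWCOperator {E' : Type*} [NormedAddCommGroup E'] [Lattice E'] [HasSolidNorm E'] [IsOrderedAddMonoid E'] [NormedSpace ℝ E']
    (P : DualPairing E E') (T : X →L[ℝ] E) : Prop :=
  ∀ f : ℕ → E', NormBddSeq f → UnNullSeq f →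
    Tendsto (fun n => ⨆ x ∈ Metric.closedBall (0 : X) 1, |P.toDual (f n) (T x)|) atTop (𝓝 0)

/-- `T : X → E'` is weak* L-weakly compact if its image of the unit ball is a weak*
L-weakly compact set. -/
def WeakStarLWCOperator {E' : Type*} [NormedAddCommGroup E'] [Lattice E'] [HasSolidNorm E'] [IsOrderedAddMonoid E'] [NormedSpace ℝ E']
    (P : DualPairing E E') (T : X →L[ℝ] E') : Prop :=
  ∀ x : ℕ → E, NormBddSeq x → UnNullSeq x →
    Tendsto (fun n => ⨆ y ∈ Metric.closedBall (0 : X) 1, |P.toDual (T y) (x n)|) atTop (𝓝 0)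

/-- A positive operator. -/
def PositiveOp {F : Type*} [NormedAddCommGroup F] [Lattice F] [HasSolidNorm F] [IsOrderedAddMonoid F] [NormedSpace ℝ F] (T : E →L[ℝ] F) : Prop :=
  ∀ x : E, 0 ≤ x → 0 ≤ T x

end Op

/-- Membership in `G^a`, the maximal ideal on which the induced norm is order continuous:
`x ∈ G^a` iff every disjoint sequence in `[0, |x|]` is norm null. -/
def InOrderContPart {G : Type*} [NormedAddCommGroup G] [Lattice G] [HasSolidNorm G] [IsOrderedAddMonoid G] (x : G) : Prop :=
  ∀ y : ℕ → G, (∀ n, 0 ≤ y n ∧ y n ≤ |x|) → DisjointSeq y →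
    Tendsto (fun n => ‖y n‖) atTop (𝓝 0)


/-!
If `x` is a nonzero positive vector of the carrier, then `|T|x ≠ 0` (otherwise `x` would be
disjoint from itself), so by the Riesz–Kantorovich formula some `y` with `|y| ≤ x` has `Ty ≠ 0`.
Given a disjoint sequence `(xₙ)` of such vectors, the corresponding `yₙ`, rescaled so that
`‖Tyₙ‖ ≥ 1`, form a disjoint sequence on which `T` is not norm null. The rescaling is by natural
numbers, since real scalar multiplication is not assumed to respect the order.
-/

section LatticeOrderedGroup

variable {G : Type*} [Lattice G] [AddCommGroup G] [IsOrderedAddMonoid G]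

theorem add_inf_eq_zero {a b c : G} (hac : a ⊓ c = 0) (hbc : b ⊓ c = 0) : (a + b) ⊓ c = 0 := by
  have hb : 0 ≤ b := hbc ▸ inf_le_left
  have hc : 0 ≤ c := hac ▸ inf_le_right
  have hle_b : (a + b) ⊓ c ≤ b :=
    calc (a + b) ⊓ c ≤ (a + b) ⊓ (c + b) := inf_le_inf_left _ (le_add_of_nonneg_right hb)
      _ = b := by rw [← inf_add, hac, zero_add]
  refine le_antisymm (hbc ▸ le_inf hle_b inf_le_right) (le_inf ?_ hc)
  exact add_nonneg (hac ▸ inf_le_left) hb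

theorem nsmul_inf_eq_zero {a c : G} (hac : a ⊓ c = 0) (n : ℕ) : (n • a) ⊓ c = 0 := by
  induction n with
  | zero => simpa using hac ▸ (inf_le_right : a ⊓ c ≤ c)
  | succ k ih => rw [succ_nsmul]; exact add_inf_eq_zero ih hac

theorem abs_nsmul_le (a : G) (n : ℕ) : |n • a| ≤ n • |a| := by
  induction n with
  | zero => simp
  | succ k ih =>
    rw [succ_nsmul, succ_nsmul]
    exact (abs_add_le _ _).trans (add_le_add_left ih _)

theorem abs_nsmul_inf_abs_nsmul_eq_zero {a b : G} (hab : |a| ⊓ |b| = 0) (m n : ℕ) :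
    |m • a| ⊓ |n • b| = 0 := by
  have hdisj : (m • |a|) ⊓ (n • |b|) = 0 := by
    rw [inf_comm]
    exact nsmul_inf_eq_zero (by rw [inf_comm]; exact nsmul_inf_eq_zero hab m) n
  exact le_antisymm (hdisj ▸ inf_le_inf (abs_nsmul_le a m) (abs_nsmul_le b n))
    (le_inf (abs_nonneg _) (abs_nonneg _))

end LatticeOrderedGroup

namespace DisjointSeq

variable {G : Type*} [NormedAddCommGroup G] [Lattice G] [HasSolidNorm G] [IsOrderedAddMonoid G]
  {x y : ℕ → G}

theorem of_abs_le (hx : DisjointSeq x) (hyx : ∀ n, |y n| ≤ |x n|) : DisjointSeq y :=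
  fun n m hnm => le_antisymm (hx hnm ▸ inf_le_inf (hyx n) (hyx m))
    (le_inf (abs_nonneg _) (abs_nonneg _))

theorem nsmul (hx : DisjointSeq x) (N : ℕ → ℕ) : DisjointSeq fun n => N n • x n :=
  fun n m hnm => abs_nsmul_inf_abs_nsmul_eq_zero (hx hnm) (N n) (N m)

end DisjointSeq

theorem exists_abs_le_apply_ne_zero_of_isLUB {E X F : Type*}
    [Lattice E] [AddCommGroup E] [IsOrderedAddMonoid E] [PartialOrder X] [Zero X] [FunLike F E X] [ZeroHomClass F E X] {T : F} {x : E} {s : X}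
    (hx : 0 ≤ x) (hs : IsLUB (T '' {y | |y| ≤ x}) s) (hs0 : s ≠ 0) :
    ∃ y, |y| ≤ x ∧ T y ≠ 0 := by
  by_contra! hT
  have himage : T '' {y | |y| ≤ x} = {0} :=
    Set.eq_singleton_iff_unique_mem.mpr
      ⟨⟨0, by simpa using hx, map_zero T⟩, by rintro _ ⟨y, hy, rfl⟩; exact hT y hy⟩
  exact hs0 (hs.unique (himage ▸ isLUB_singleton))

theorem exists_one_le_norm_nsmul {X : Type*} [NormedAddCommGroup X] [NormedSpace ℝ X] {v : X}
    (hv : v ≠ 0) : ∃ N : ℕ, 1 ≤ ‖N • v‖ := by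
  obtain ⟨N, hN⟩ := exists_nat_ge ‖v‖⁻¹
  refine ⟨N, ?_⟩
  rw [RCLike.norm_nsmul ℝ, nsmul_eq_mul]
  calc (1 : ℝ) = ‖v‖⁻¹ * ‖v‖ := (inv_mul_cancel₀ (norm_ne_zero_iff.mpr hv)).symm
    _ ≤ N * ‖v‖ := mul_le_mul_of_nonneg_right hN (norm_nonneg _)

theorem stmt0_general {E : Type*} [NormedAddCommGroup E] [Lattice E] [HasSolidNorm E] [IsOrderedAddMonoid E] [NormedSpace ℝ E] {X : Type*} [NormedAddCommGroup X] [Lattice X] [NormedSpace ℝ X] (T S : E →L[ℝ] X)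
    (hS : ∀ x : E, 0 ≤ x → IsLUB ((fun y => T y) '' {y : E | |y| ≤ x}) (S x))
    (hT : ∀ x : ℕ → E, DisjointSeq x → Tendsto (fun n => ‖T (x n)‖) atTop (𝓝 0)) :
    ¬ ∃ x : ℕ → E,
      (∀ n, 0 < x n ∧ x n ∈ {y : E | ∀ z : E, S |z| = 0 → |y| ⊓ |z| = 0}) ∧
      DisjointSeq x := by
  rintro ⟨x, hx, hdisj⟩
  have hSx : ∀ n, S (x n) ≠ 0 := fun n hSx0 => by
    have hself := (hx n).2 (x n) (by rwa [abs_of_pos (hx n).1])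
    rw [inf_idem, abs_of_pos (hx n).1] at hself
    exact (hx n).1.ne' hself
  choose y hyx hTy using fun n =>
    exists_abs_le_apply_ne_zero_of_isLUB (hx n).1.le (hS (x n) (hx n).1.le) (hSx n)
  choose N hN using fun n => exists_one_le_norm_nsmul (hTy n)
  have hz : DisjointSeq fun n => N n • y n :=
    (hdisj.of_abs_le fun n => (hyx n).trans_eq (abs_of_pos (hx n).1).symm).nsmul N
  obtain ⟨n, hn⟩ := ((hT _ hz).eventually_lt_const one_pos).exists
  exact (hN n).not_gt (by simpa only [map_nsmul] using hn)

/-- If `T : E → X` (between Banach lattices, so that the modulus `S = |T|` exists, characterized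
by the Riesz–Kantorovich formula) sends every disjoint sequence to a norm null sequence, then
the carrier `C_T = {x : |T|(|x|) = 0}ᵈ` contains no infinite disjoint sequence of nonzero
positive vectors. -/
theorem stmt0 {E : Type*} [NormedAddCommGroup E] [Lattice E] [HasSolidNorm E] [IsOrderedAddMonoid E] [NormedSpace ℝ E] [CompleteSpace E] {X : Type*} [NormedAddCommGroup X] [Lattice X] [HasSolidNorm X] [IsOrderedAddMonoid X] [NormedSpace ℝ X] [CompleteSpace X] (T S : E →L[ℝ] X)
    (hS : ∀ x : E, 0 ≤ x → IsLUB ((fun y => T y) '' {y : E | |y| ≤ x}) (S x))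
    (hT : ∀ x : ℕ → E, DisjointSeq x → Tendsto (fun n => ‖T (x n)‖) atTop (𝓝 0)) :
    ¬ ∃ x : ℕ → E,
      (∀ n, 0 < x n ∧ x n ∈ {y : E | ∀ z : E, S |z| = 0 → |y| ⊓ |z| = 0}) ∧
      DisjointSeq x :=
  stmt0_general T S hS hT
end

section
/- Let E be a Banach lattice and A ⊆ E a weak L-weakly compact set. Then the solid hull Sol(A) = {x ∈ E : ∃ y ∈ A, |x| ≤ |y|} is also weak L-weakly compact. -/
open Filter Topology Bornology

/-!
If `|x| ≤ |y|` then `|x'(x)| ≤ |x'|(|y|)`, and this value is attained at `y` itself by a functional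
dominated by `|x'|`: with `C` the component of `|x'|` in the band generated by `y⁺`, given on the
positive cone by `C(z) = sup_n |x'|(z ∧ n y⁺)`, the functional `g = 2C - |x'|` satisfies `|g| ≤ |x'|`
and `g(y) = |x'|(|y|)`. Domination by `|x'ₙ|` preserves norm boundedness and un-nullness, so
functionals `gₙ` of this kind, chosen to nearly attain the supremum over `Sol(A)`, bring the claim
back to the hypothesis on `A`.
-/

section LatticeOrderedGroup

variable {G : Type*} [AddCommGroup G] [Lattice G] [IsOrderedAddMonoid G]

lemma add_inf_le_inf_add_inf {x z w : G} (hx : 0 ≤ x) (hz : 0 ≤ z) (hw : 0 ≤ w) :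
    (x + z) ⊓ w ≤ x ⊓ w + z ⊓ w := by
  rw [inf_add, add_inf, add_inf]
  exact le_inf (le_inf inf_le_left (inf_le_right.trans (le_add_of_nonneg_left hx)))
    (le_inf (inf_le_right.trans (le_add_of_nonneg_right hz))
      (inf_le_right.trans (le_add_of_nonneg_left hw)))

lemma inf_nsmul_eq_zero_of_inf_eq_zero {a b : G} (ha : 0 ≤ a) (hb : 0 ≤ b) (hab : a ⊓ b = 0)
    (n : ℕ) : a ⊓ n • b = 0 := by
  induction n with
  | zero => simpa using ha
  | succ n ih =>
    refine le_antisymm ?_ (le_inf ha (nsmul_nonneg hb _))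
    calc a ⊓ (n + 1) • b = (n • b + b) ⊓ a := by rw [succ_nsmul, inf_comm]
      _ ≤ n • b ⊓ a + b ⊓ a := add_inf_le_inf_add_inf (nsmul_nonneg hb n) hb ha
      _ = 0 := by rw [inf_comm, ih, inf_comm, hab, add_zero]

lemma posPart_add_negPart_add_eq (a b : G) :
    (a + b)⁺ + (a⁻ + b⁻) = (a + b)⁻ + (a⁺ + b⁺) := by
  rw [← sub_eq_zero]
  calc _ = ((a + b)⁺ - (a + b)⁻) - (a⁺ - a⁻) - (b⁺ - b⁻) := by abel
    _ = 0 := by rw [posPart_sub_negPart, posPart_sub_negPart, posPart_sub_negPart]; abel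

def addMonoidHomOfAddOnNonneg {M : Type*} [AddCommGroup M] (h : G → M)
    (hadd : ∀ x z, 0 ≤ x → 0 ≤ z → h (x + z) = h x + h z) : G →+ M :=
  AddMonoidHom.mk' (fun x => h x⁺ - h x⁻) fun a b => by
    have key := congrArg h (posPart_add_negPart_add_eq a b)
    rw [hadd _ _ (posPart_nonneg _) (add_nonneg (negPart_nonneg a) (negPart_nonneg b)),
      hadd _ _ (negPart_nonneg _) (add_nonneg (posPart_nonneg a) (posPart_nonneg b)),
      hadd _ _ (negPart_nonneg a) (negPart_nonneg b),
      hadd _ _ (posPart_nonneg a) (posPart_nonneg b)] at key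
    rw [sub_add_sub_comm, sub_eq_sub_iff_add_eq_add, key, add_comm]

lemma addMonoidHomOfAddOnNonneg_apply_of_nonneg {M : Type*} [AddCommGroup M] (h : G → M)
    (hadd : ∀ x z, 0 ≤ x → 0 ≤ z → h (x + z) = h x + h z) {x : G} (hx : 0 ≤ x) :
    addMonoidHomOfAddOnNonneg h hadd x = h x := by
  have h0 : h 0 = 0 := by simpa using hadd 0 0 le_rfl le_rfl
  change h x⁺ - h x⁻ = h x
  rw [posPart_eq_self.mpr hx, negPart_eq_zero.mpr hx, h0, sub_zero]

end LatticeOrderedGroup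

section BandComponent

variable {G : Type*} [AddCommGroup G] [Lattice G] {F : Type*} [FunLike F G ℝ]

/-- On the positive cone, the component of `f` in the band generated by `u ≥ 0`. -/
noncomputable def bandComponent (f : F) (u x : G) : ℝ :=
  ⨆ n : ℕ, f (x ⊓ n • u)

variable {f : F}

lemma apply_inf_nsmul_le_bandComponent (hf : Monotone f) (u x : G) (n : ℕ) :
    f (x ⊓ n • u) ≤ bandComponent f u x :=
  le_ciSup (f := fun m : ℕ => f (x ⊓ m • u)) ⟨f x, by rintro - ⟨m, rfl⟩; exact hf inf_le_left⟩ n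

lemma bandComponent_le (hf : Monotone f) (u x : G) : bandComponent f u x ≤ f x :=
  ciSup_le fun _ => hf inf_le_left

lemma bandComponent_self (hf : Monotone f) (u : G) : bandComponent f u u = f u :=
  (bandComponent_le hf u u).antisymm (by simpa using apply_inf_nsmul_le_bandComponent hf u u 1)

variable [AddMonoidHomClass F G ℝ]

lemma bandComponent_nonneg (hf : Monotone f) (u : G) {x : G} (hx : 0 ≤ x) :
    0 ≤ bandComponent f u x := by
  simpa [inf_eq_right.mpr hx] using apply_inf_nsmul_le_bandComponent hf u x 0

variable [IsOrderedAddMonoid G]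

lemma bandComponent_add (hf : Monotone f) {u : G} (hu : 0 ≤ u) {x z : G} (hx : 0 ≤ x)
    (hz : 0 ≤ z) : bandComponent f u (x + z) = bandComponent f u x + bandComponent f u z := by
  refine le_antisymm (ciSup_le fun n => ?_) (ciSup_add_ciSup_le fun n m => ?_)
  · calc f ((x + z) ⊓ n • u) ≤ f (x ⊓ n • u + z ⊓ n • u) :=
          hf (add_inf_le_inf_add_inf hx hz (nsmul_nonneg hu n))
      _ = f (x ⊓ n • u) + f (z ⊓ n • u) := map_add f _ _
      _ ≤ _ := add_le_add (apply_inf_nsmul_le_bandComponent hf u x n)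
          (apply_inf_nsmul_le_bandComponent hf u z n)
  · have hle : x ⊓ n • u + z ⊓ m • u ≤ (x + z) ⊓ (n + m) • u :=
      le_inf (add_le_add inf_le_left inf_le_left)
        (by rw [add_nsmul]; exact add_le_add inf_le_right inf_le_right)
    calc f (x ⊓ n • u) + f (z ⊓ m • u) = f (x ⊓ n • u + z ⊓ m • u) := (map_add f _ _).symm
      _ ≤ _ := (hf hle).trans (apply_inf_nsmul_le_bandComponent hf u _ _)

lemma bandComponent_eq_zero_of_inf_eq_zero {u : G} (hu : 0 ≤ u) {x : G} (hx : 0 ≤ x)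
    (hxu : x ⊓ u = 0) : bandComponent f u x = 0 := by
  simp [bandComponent, inf_nsmul_eq_zero_of_inf_eq_zero hx hu hxu]

end BandComponent

section NormedLattice

variable {E : Type*} [NormedAddCommGroup E] [Lattice E] [HasSolidNorm E] [IsOrderedAddMonoid E]

lemma Bornology.IsBounded.solidHull {A : Set E} (hA : IsBounded A) : IsBounded (SolidHull A) := by
  obtain ⟨D, hD⟩ := isBounded_iff_forall_norm_le.mp hA
  refine isBounded_iff_forall_norm_le.mpr ⟨D, ?_⟩
  rintro x ⟨y, hy, hxy⟩
  exact (HasSolidNorm.solid hxy).trans (hD y hy)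

lemma NormBddSeq.of_abs_le {x y : ℕ → E} (hx : NormBddSeq x) (hyx : ∀ n, |y n| ≤ |x n|) :
    NormBddSeq y := by
  obtain ⟨C, hC⟩ := hx
  exact ⟨C, fun n => (HasSolidNorm.solid (hyx n)).trans (hC n)⟩

lemma UnNullSeq.of_abs_le {x y : ℕ → E} (hx : UnNullSeq x) (hyx : ∀ n, |y n| ≤ |x n|) :
    UnNullSeq y := by
  intro u hu
  refine squeeze_zero (fun _ => norm_nonneg _) (fun n => HasSolidNorm.solid ?_) (hx u hu)
  rw [abs_of_nonneg (le_inf (abs_nonneg _) hu), abs_of_nonneg (le_inf (abs_nonneg _) hu)]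
  exact inf_le_inf_right u (hyx n)

variable [NormedSpace ℝ E]

lemma exists_strongDual_bandComponent {f : StrongDual ℝ E} (hf : Monotone f) {u : E}
    (hu : 0 ≤ u) : ∃ T : StrongDual ℝ E, (∀ x, 0 ≤ x → 0 ≤ T x ∧ T x ≤ f x) ∧ T u = f u ∧
      ∀ x, 0 ≤ x → x ⊓ u = 0 → T x = 0 := by
  have hadd : ∀ x z : E, 0 ≤ x → 0 ≤ z →
      bandComponent f u (x + z) = bandComponent f u x + bandComponent f u z :=
    fun x z hx hz => bandComponent_add hf hu hx hz
  set H := addMonoidHomOfAddOnNonneg (bandComponent f u) hadd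
  have hH : ∀ {x : E}, 0 ≤ x → H x = bandComponent f u x :=
    addMonoidHomOfAddOnNonneg_apply_of_nonneg _ hadd
  have hbound : ∀ x : E, ‖H x‖ ≤ ‖f‖ * ‖x‖ := by
    intro x
    have h₁ := bandComponent_nonneg hf u (posPart_nonneg x)
    have h₂ := bandComponent_nonneg hf u (negPart_nonneg x)
    calc ‖H x‖ = |bandComponent f u x⁺ - bandComponent f u x⁻| := rfl
      _ ≤ bandComponent f u x⁺ + bandComponent f u x⁻ := by
          rw [abs_le]; constructor <;> linarith
      _ = bandComponent f u |x| := by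
          rw [← hadd _ _ (posPart_nonneg x) (negPart_nonneg x), posPart_add_negPart]
      _ ≤ f |x| := bandComponent_le hf u _
      _ ≤ ‖f‖ * ‖x‖ := by
          simpa only [norm_abs_eq_norm] using (le_abs_self _).trans (f.le_opNorm |x|)
  refine ⟨H.toRealLinearMap (AddMonoidHomClass.lipschitz_of_bound H _ hbound).continuous,
    fun x hx => ?_, ?_, fun x hx hxu => ?_⟩
  · exact ⟨(hH hx).symm ▸ bandComponent_nonneg hf u hx, (hH hx).symm ▸ bandComponent_le hf u x⟩
  · exact (hH hu).trans (bandComponent_self hf u)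
  · exact (hH hx).trans (bandComponent_eq_zero_of_inf_eq_zero hu hx hxu)

end NormedLattice

lemma le_biSup_of_forall_le {α : Type*} {F : α → ℝ} {B : Set α} {M : ℝ} (hM : ∀ x ∈ B, F x ≤ M)
    {x : α} (hx : x ∈ B) : F x ≤ ⨆ z ∈ B, F z :=
  le_ciSup₂ (f := fun z (_ : z ∈ B) => F z) ⟨M, by
    simp only [mem_upperBounds, Set.mem_iUnion, Set.mem_range]
    rintro - ⟨z, hz, rfl⟩
    exact hM z hz⟩ x hx

lemma exists_lt_of_lt_biSup {α : Type*} [Nonempty α] {F : α → ℝ} {B : Set α} {c : ℝ}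
    (hc : 0 ≤ c) (h : c < ⨆ x ∈ B, F x) : ∃ x ∈ B, c < F x := by
  obtain ⟨x, hx⟩ := exists_lt_of_lt_ciSup h
  by_cases hxB : x ∈ B
  · exact ⟨x, hxB, by rwa [ciSup_pos hxB] at hx⟩
  · rw [ciSup_neg hxB, Real.sSup_empty] at hx
    exact absurd hc hx.not_ge

namespace DualPairing

variable {E E' : Type*} [NormedAddCommGroup E] [Lattice E] [HasSolidNorm E] [IsOrderedAddMonoid E]
  [NormedSpace ℝ E] [NormedAddCommGroup E'] [Lattice E'] [HasSolidNorm E'] [IsOrderedAddMonoid E']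
  [NormedSpace ℝ E'] (P : DualPairing E E')

lemma monotone_toDual_apply {f : E'} (hf : 0 ≤ f) : Monotone (P.toDual f) := fun a b hab => by
  have := (P.pos_iff f).mp hf (b - a) (sub_nonneg.mpr hab)
  rw [map_sub] at this
  linarith

lemma toDual_apply_le_apply {f g : E'} (hfg : f ≤ g) {x : E} (hx : 0 ≤ x) :
    P.toDual f x ≤ P.toDual g x := by
  have := (P.pos_iff (g - f)).mp (sub_nonneg.mpr hfg) x hx
  rw [map_sub, sub_apply] at this
  linarith

lemma abs_toDual_apply_le (f : E') (x : E) : |P.toDual f x| ≤ P.toDual |f| |x| := by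
  have habs : ∀ z : E, 0 ≤ z → |P.toDual f z| ≤ P.toDual |f| z := fun z hz => by
    have h := P.toDual_apply_le_apply (neg_le.mpr (neg_le_abs f)) hz
    rw [map_neg, neg_apply] at h
    exact abs_le.mpr ⟨by linarith, P.toDual_apply_le_apply (le_abs_self f) hz⟩
  calc |P.toDual f x| = |P.toDual f x⁺ - P.toDual f x⁻| := by rw [← map_sub, posPart_sub_negPart]
    _ ≤ |P.toDual f x⁺| + |P.toDual f x⁻| := abs_sub _ _
    _ ≤ P.toDual |f| x⁺ + P.toDual |f| x⁻ :=
        add_le_add (habs _ (posPart_nonneg x)) (habs _ (negPart_nonneg x))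
    _ = P.toDual |f| |x| := by rw [← map_add, posPart_add_negPart]

lemma exists_abs_le_toDual_apply_eq {f : E'} (hf : 0 ≤ f) (y : E) :
    ∃ g : E', |g| ≤ f ∧ P.toDual g y = P.toDual f |y| := by
  obtain ⟨T, hT, hTy, hT0⟩ :=
    exists_strongDual_bandComponent (P.monotone_toDual_apply hf) (posPart_nonneg y)
  set t := P.toDual.symm T
  have ht : P.toDual t = T := P.toDual.apply_symm_apply T
  have ht0 : 0 ≤ t := (P.pos_iff t).mpr fun x hx => ht ▸ (hT x hx).1
  have htf : t ≤ f := sub_nonneg.mp <| (P.pos_iff _).mpr fun x hx => by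
    rw [map_sub, sub_apply, ht]
    linarith [(hT x hx).2]
  refine ⟨t + t - f, abs_le'.mpr ⟨?_, ?_⟩, ?_⟩
  · calc t + t - f ≤ f + f - f := by gcongr
      _ = f := by abel
  · calc -(t + t - f) = f - (t + t) := by abel
      _ ≤ f - (0 + 0) := by gcongr
      _ = f := by abel
  · have hTy' : T y = P.toDual f y⁺ := by
      rw [← hTy, ← sub_zero (T y⁺), ← hT0 _ (negPart_nonneg y)
        (by rw [inf_comm]; exact posPart_inf_negPart_eq_zero y), ← map_sub, posPart_sub_negPart]
    have hfy : P.toDual f y = P.toDual f y⁺ - P.toDual f y⁻ := by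
      rw [← map_sub, posPart_sub_negPart]
    rw [map_sub, map_add, ht, sub_apply, add_apply,
      hTy', hfy, ← posPart_add_negPart y, map_add]
    ring

lemma exists_abs_le_biSup_solidHull_le {A : Set E} (hA : IsBounded A) (f : E') {δ : ℝ}
    (hδ : 0 < δ) : ∃ g : E', |g| ≤ |f| ∧
      ⨆ x ∈ SolidHull A, |P.toDual f x| ≤ (⨆ y ∈ A, |P.toDual g y|) + δ := by
  have hnonneg : ∀ g : E', 0 ≤ ⨆ y ∈ A, |P.toDual g y| := fun g =>
    Real.iSup_nonneg fun _ => Real.iSup_nonneg fun _ => abs_nonneg _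
  by_cases hS : ⨆ x ∈ SolidHull A, |P.toDual f x| ≤ δ
  · exact ⟨0, by simp, hS.trans (le_add_of_nonneg_left (hnonneg 0))⟩
  obtain ⟨x, ⟨y, hyA, hxy⟩, hx⟩ := exists_lt_of_lt_biSup (F := fun x => |P.toDual f x|) (sub_nonneg.mpr (not_le.mp hS).le) (sub_lt_self _ hδ)
  obtain ⟨g, hg, hgy⟩ := P.exists_abs_le_toDual_apply_eq (abs_nonneg f) y
  obtain ⟨D, hD⟩ := isBounded_iff_forall_norm_le.mp hA
  have hbound : ∀ z ∈ A, |P.toDual g z| ≤ ‖P.toDual g‖ * D := fun z hz =>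
    ((P.toDual g).le_opNorm z).trans (by gcongr; exact hD z hz)
  have : |P.toDual f x| ≤ ⨆ y ∈ A, |P.toDual g y| :=
    calc |P.toDual f x| ≤ P.toDual |f| |x| := P.abs_toDual_apply_le f x
      _ ≤ P.toDual |f| |y| := P.monotone_toDual_apply (abs_nonneg f) hxy
      _ = P.toDual g y := hgy.symm
      _ ≤ |P.toDual g y| := le_abs_self _
      _ ≤ _ := le_biSup_of_forall_le hbound hyA
  refine ⟨g, hg, ?_⟩
  linarith

end DualPairing

theorem stmt1_general {E : Type*} [NormedAddCommGroup E] [Lattice E] [HasSolidNorm E] [IsOrderedAddMonoid E] [NormedSpace ℝ E] {E' : Type*} [NormedAddCommGroup E'] [Lattice E'] [HasSolidNorm E'] [IsOrderedAddMonoid E'] [NormedSpace ℝ E']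
    (P : DualPairing E E') (A : Set E) (hA : WeakLWCSet P A) :
    WeakLWCSet P (SolidHull A) := by
  obtain ⟨hAb, hAf⟩ := hA
  refine ⟨hAb.solidHull, fun f hfb hfun => ?_⟩
  choose g hgf hg using fun n : ℕ =>
    P.exists_abs_le_biSup_solidHull_le hAb (f n) (Nat.one_div_pos_of_nat (α := ℝ) (n := n))
  have hlim := (hAf g (hfb.of_abs_le hgf) (hfun.of_abs_le hgf)).add
    tendsto_one_div_add_atTop_nhds_zero_nat
  rw [add_zero] at hlim
  exact squeeze_zero (fun n => Real.iSup_nonneg fun _ => Real.iSup_nonneg fun _ => abs_nonneg _)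
    hg hlim

/-- The solid hull of a weak L-weakly compact set is weak L-weakly compact. -/
theorem stmt1 {E : Type*} [NormedAddCommGroup E] [Lattice E] [HasSolidNorm E] [IsOrderedAddMonoid E] [NormedSpace ℝ E] [CompleteSpace E] {E' : Type*} [NormedAddCommGroup E'] [Lattice E'] [HasSolidNorm E'] [IsOrderedAddMonoid E'] [NormedSpace ℝ E'] [CompleteSpace E']
    (P : DualPairing E E') (A : Set E) (hA : WeakLWCSet P A) :
    WeakLWCSet P (SolidHull A) :=
  stmt1_general P A hA
end

section
/- Let E be a Banach lattice and A ⊆ E a weak L-weakly compact set. Then the convex hull of the solid hull of A is weak L-weakly compact. -/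
/-!
Let `x` lie in the convex hull of `Sol(A)` and let `f ∈ E'`. Convexity of `|f|` gives `z ∈ Sol(A)`
with `|f x| ≤ |f z|`, and if `|z| ≤ |y|` with `y ∈ A` then `|f z| ≤ |f|(|z|) ≤ |f|(|y|)`.
Hahn–Banach for the seminorm `v ↦ |f|(|v|)` yields `h ∈ E'` with `|h| ≤ |f|` and `h y = |f|(|y|)`.
For a norm bounded un-null sequence `(fₙ)` and points `xₙ` of the hull, the functionals `hₙ` so
obtained are again norm bounded and un-null, hence `|fₙ xₙ| ≤ sup_{y ∈ A} |hₙ y| → 0`; taking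
the `xₙ` to be near-maximisers gives the claim.
-/

open Filter Topology Bornology

section RealSup

variable {α : Type*} {S : Set α}

lemma exists_mem_biSup_lt_add (hS : S.Nonempty) {g : α → ℝ} (hg : ∀ x ∈ S, 0 ≤ g x) {ε : ℝ}
    (hε : 0 < ε) : ∃ x ∈ S, ⨆ y ∈ S, g y < g x + ε := by
  by_contra! h
  obtain ⟨x₀, hx₀⟩ := hS
  have hε_le : ε ≤ ⨆ y ∈ S, g y := by linarith [h x₀ hx₀, hg x₀ hx₀]
  have : ⨆ y ∈ S, g y ≤ (⨆ y ∈ S, g y) - ε :=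
    Real.iSup_le (fun y => Real.iSup_le (fun hy => by linarith [h y hy]) (by linarith))
      (by linarith)
  linarith

lemma tendsto_biSup_of_forall_tendsto {g : ℕ → α → ℝ} (hg : ∀ n, ∀ x ∈ S, 0 ≤ g n x)
    (h : ∀ x : ℕ → α, (∀ n, x n ∈ S) → Tendsto (fun n => g n (x n)) atTop (𝓝 0)) :
    Tendsto (fun n => ⨆ x ∈ S, g n x) atTop (𝓝 0) := by
  rcases S.eq_empty_or_nonempty with rfl | hS
  · simp
  choose x hxS hx using fun n : ℕ =>
    exists_mem_biSup_lt_add hS (hg n) (Nat.one_div_pos_of_nat (n := n))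
  refine squeeze_zero (fun n => Real.iSup_nonneg fun y => Real.iSup_nonneg fun hy => hg n y hy)
    (fun n => (hx n).le) ?_
  simpa using (h x hxS).add tendsto_one_div_add_atTop_nhds_zero_nat

end RealSup

lemma ContinuousLinearMap.abs_apply_le_biSup_abs {E : Type*} [SeminormedAddCommGroup E]
    [NormedSpace ℝ E] (φ : StrongDual ℝ E) {A : Set E} (hA : IsBounded A) {x : E} (hx : x ∈ A) :
    |φ x| ≤ ⨆ y ∈ A, |φ y| := by
  obtain ⟨C, hC⟩ := isBounded_iff_forall_norm_le.1 hA
  refine le_ciSup₂ (f := fun y _ => |φ y|) ⟨‖φ‖ * C, ?_⟩ x hx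
  simp only [upperBounds, Set.mem_iUnion, Set.mem_range]
  rintro _ ⟨y, hy, rfl⟩
  exact (φ.le_opNorm y).trans (by gcongr; exact hC y hy)

lemma nonneg_of_two_pow_nsmul_nonneg {G : Type*} [AddCommGroup G] [Lattice G]
    [IsOrderedAddMonoid G] {y : G} : ∀ m : ℕ, 0 ≤ 2 ^ m • y → 0 ≤ y
  | 0, h => by simpa using h
  | m + 1, h => by
    rw [pow_succ, mul_nsmul'] at h
    exact nsmul_two_semiclosed (nonneg_of_two_pow_nsmul_nonneg m h)

section LatticeScalars

variable {G : Type*} [NormedAddCommGroup G] [Lattice G] [HasSolidNorm G] [IsOrderedAddMonoid G]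
  [NormedSpace ℝ G]

-- The positive cone is closed, and dyadic multiples of a positive vector are positive.
instance HasSolidNorm.toPosSMulMono : PosSMulMono ℝ G := by
  refine .of_smul_nonneg fun c hc y hy => ?_
  have hdyadic : ∀ k m : ℕ, 0 ≤ ((k : ℝ) / 2 ^ m) • y := fun k m =>
    nonneg_of_two_pow_nsmul_nonneg m <| by
      rw [← Nat.cast_smul_eq_nsmul ℝ, smul_smul, Nat.cast_pow, Nat.cast_ofNat,
        mul_div_cancel₀ _ (by positivity), Nat.cast_smul_eq_nsmul]
      exact nsmul_nonneg hy k
  have happrox : Tendsto (fun m : ℕ => (⌊c * 2 ^ m⌋₊ : ℝ) / 2 ^ m) atTop (𝓝 c) :=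
    (tendsto_nat_floor_mul_div_atTop hc).comp (tendsto_pow_atTop_atTop_of_one_lt one_lt_two)
  exact isClosed_nonneg.mem_of_tendsto (happrox.smul_const y) (.of_forall fun m => hdyadic _ m)

lemma abs_smul' (c : ℝ) (x : G) : |c • x| = |c| • |x| := by
  wlog hc : 0 ≤ c generalizing c
  · rw [← abs_neg, ← neg_smul, this (-c) (by linarith), abs_neg]
  rcases hc.eq_or_lt with rfl | hc
  · simp
  rw [abs_of_pos hc, abs, abs, ← smul_neg]
  exact ((OrderIso.smulRight hc).map_sup x (-x)).symm

end LatticeScalars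

section SolidNorm

variable {G : Type*} [NormedAddCommGroup G] [Lattice G] [HasSolidNorm G] [IsOrderedAddMonoid G]
  {x y : ℕ → G}

lemma NormBddSeq.of_abs_le_s2 (hy : NormBddSeq y) (hxy : ∀ n, |x n| ≤ |y n|) : NormBddSeq x :=
  let ⟨C, hC⟩ := hy
  ⟨C, fun n => (norm_le_norm_of_abs_le_abs (hxy n)).trans (hC n)⟩

lemma UnNullSeq.of_abs_le_s2 (hy : UnNullSeq y) (hxy : ∀ n, |x n| ≤ |y n|) : UnNullSeq x :=
  fun u hu => squeeze_zero (fun _ => norm_nonneg _) (fun n => norm_le_norm_of_abs_le_abs <| by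
    rw [abs_of_nonneg (le_inf (abs_nonneg _) hu), abs_of_nonneg (le_inf (abs_nonneg _) hu)]
    exact inf_le_inf_right u (hxy n)) (hy u hu)

lemma isBounded_solidHull {A : Set G} (hA : IsBounded A) : IsBounded (SolidHull A) := by
  obtain ⟨C, hC⟩ := isBounded_iff_forall_norm_le.1 hA
  exact isBounded_iff_forall_norm_le.2
    ⟨C, fun z ⟨y, hy, hzy⟩ => (norm_le_norm_of_abs_le_abs hzy).trans (hC y hy)⟩

end SolidNorm

theorem Seminorm.exists_strongDual_abs_le_eq {E : Type*} [AddCommGroup E] [Module ℝ E]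
    [TopologicalSpace E] [PolynormableSpace ℝ E] (p : Seminorm ℝ E) (hp : Continuous p) (y : E) :
    ∃ ψ : StrongDual ℝ E, (∀ x, |ψ x| ≤ p x) ∧ ψ y = p y := by
  rcases eq_or_ne y 0 with rfl | hy
  · exact ⟨0, by simp, by simp⟩
  let coord := LinearEquiv.coord ℝ E y hy
  obtain ⟨ψ, hψy, hψp⟩ := Module.Dual.exists_continuous_extension_of_le_seminorm_real
    (Submodule.span ℝ {y}) (p y • coord.toLinearMap) hp fun x => by
      conv_rhs => rw [← LinearEquiv.coord_apply_smul ℝ E y hy x]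
      rw [map_smul_eq_mul, Real.norm_eq_abs, LinearMap.smul_apply, smul_eq_mul, mul_comm]
      exact mul_le_mul_of_nonneg_right (le_abs_self _) (apply_nonneg p y)
  refine ⟨ψ, hψp, ?_⟩
  simpa [coord, LinearEquiv.coord_self] using hψy ⟨y, Submodule.mem_span_singleton_self y⟩

namespace DualPairing

variable {E E' : Type*} [NormedAddCommGroup E] [Lattice E] [HasSolidNorm E] [IsOrderedAddMonoid E]
  [NormedSpace ℝ E] [NormedAddCommGroup E'] [Lattice E'] [HasSolidNorm E'] [IsOrderedAddMonoid E']
  [NormedSpace ℝ E'] (P : DualPairing E E')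

lemma apply_nonneg {g : E'} (hg : 0 ≤ g) {x : E} (hx : 0 ≤ x) : 0 ≤ P.toDual g x :=
  (P.pos_iff g).1 hg x hx

lemma apply_le_apply_of_le {g h : E'} (hgh : g ≤ h) {x : E} (hx : 0 ≤ x) :
    P.toDual g x ≤ P.toDual h x := by
  simpa using P.apply_nonneg (sub_nonneg.2 hgh) hx

lemma apply_mono {g : E'} (hg : 0 ≤ g) {x y : E} (hxy : x ≤ y) :
    P.toDual g x ≤ P.toDual g y := by
  simpa using P.apply_nonneg hg (sub_nonneg.2 hxy)

lemma abs_apply_le (g : E') (x : E) : |P.toDual g x| ≤ P.toDual |g| |x| := by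
  have hx : P.toDual g x = P.toDual g x⁺ - P.toDual g x⁻ := by
    rw [← map_sub, posPart_sub_negPart]
  have habs : P.toDual |g| |x| = P.toDual |g| x⁺ + P.toDual |g| x⁻ := by
    rw [← map_add, posPart_add_negPart]
  have h₁ := P.apply_le_apply_of_le (le_abs_self g) (posPart_nonneg x)
  have h₂ := P.apply_le_apply_of_le (le_abs_self g) (negPart_nonneg x)
  have h₃ := P.apply_le_apply_of_le (neg_le_abs g) (posPart_nonneg x)
  have h₄ := P.apply_le_apply_of_le (neg_le_abs g) (negPart_nonneg x)
  simp only [map_neg, neg_apply] at h₃ h₄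
  rw [abs_le, hx, habs]
  constructor <;> linarith

noncomputable def absSeminorm {g : E'} (hg : 0 ≤ g) : Seminorm ℝ E :=
  .of (fun x => P.toDual g |x|)
    (fun x y => by simpa only [map_add] using P.apply_mono hg (abs_add_le x y))
    (fun c x => by rw [abs_smul', map_smul, smul_eq_mul, Real.norm_eq_abs])

@[simp]
lemma absSeminorm_apply {g : E'} (hg : 0 ≤ g) (x : E) : P.absSeminorm hg x = P.toDual g |x| :=
  rfl

lemma continuous_absSeminorm {g : E'} (hg : 0 ≤ g) : Continuous (P.absSeminorm hg) :=
  (P.toDual g).continuous.comp (continuous_id.sup continuous_neg)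

theorem exists_abs_le_apply_eq {g : E'} (hg : 0 ≤ g) (y : E) :
    ∃ h : E', |h| ≤ g ∧ P.toDual h y = P.toDual g |y| := by
  obtain ⟨ψ, hψ, hψy⟩ :=
    (P.absSeminorm hg).exists_strongDual_abs_le_eq (P.continuous_absSeminorm hg) y
  have hψg : ∀ x, 0 ≤ x → |ψ x| ≤ P.toDual g x := fun x hx => by
    simpa [abs_of_nonneg hx] using hψ x
  refine ⟨P.toDual.symm ψ, abs_le'.2 ⟨?_, ?_⟩, by simpa using hψy⟩
  · rw [← sub_nonneg, P.pos_iff]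
    intro x hx
    simpa using (le_abs_self _).trans (hψg x hx)
  · rw [← sub_nonneg, P.pos_iff]
    intro x hx
    have := (neg_le_abs _).trans (hψg x hx)
    simp only [sub_neg_eq_add, map_add, add_apply, LinearIsometryEquiv.apply_symm_apply]
    linarith

theorem exists_abs_le_apply_of_mem_convexHull_solidHull (g : E') {A : Set E} {x : E}
    (hx : x ∈ convexHull ℝ (SolidHull A)) :
    ∃ h : E', |h| ≤ |g| ∧ ∃ y ∈ A, |P.toDual g x| ≤ P.toDual h y := by
  have hconvex : ConvexOn ℝ Set.univ (fun x => |P.toDual g x|) :=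
    (convexOn_norm convex_univ).comp_linearMap (P.toDual g : E →ₗ[ℝ] ℝ)
  obtain ⟨z, ⟨y, hyA, hzy⟩, hxz⟩ := hconvex.exists_ge_of_mem_convexHull (Set.subset_univ _) hx
  obtain ⟨h, hhg, hhy⟩ := P.exists_abs_le_apply_eq (abs_nonneg g) y
  refine ⟨h, hhg, y, hyA, ?_⟩
  calc |P.toDual g x| ≤ |P.toDual g z| := hxz
    _ ≤ P.toDual |g| |z| := P.abs_apply_le g z
    _ ≤ P.toDual |g| |y| := P.apply_mono (abs_nonneg g) hzy
    _ = P.toDual h y := hhy.symm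

end DualPairing

theorem stmt2_general {E : Type*} [NormedAddCommGroup E] [Lattice E] [HasSolidNorm E] [IsOrderedAddMonoid E] [NormedSpace ℝ E] {E' : Type*} [NormedAddCommGroup E'] [Lattice E'] [HasSolidNorm E'] [IsOrderedAddMonoid E'] [NormedSpace ℝ E']
    (P : DualPairing E E') (A : Set E) (hA : WeakLWCSet P A) :
    WeakLWCSet P (convexHull ℝ (SolidHull A)) := by
  obtain ⟨hA_bdd, hA_tendsto⟩ := hA
  refine ⟨isBounded_convexHull.2 (isBounded_solidHull hA_bdd), fun f hf_bdd hf_un => ?_⟩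
  refine tendsto_biSup_of_forall_tendsto (fun _ _ _ => abs_nonneg _) fun x hx => ?_
  choose h hhf y hyA hxy using fun n =>
    P.exists_abs_le_apply_of_mem_convexHull_solidHull (f n) (hx n)
  refine squeeze_zero (fun _ => abs_nonneg _) (fun n => (hxy n).trans ?_)
    (hA_tendsto h (hf_bdd.of_abs_le_s2 hhf) (hf_un.of_abs_le_s2 hhf))
  exact (le_abs_self _).trans ((P.toDual (h n)).abs_apply_le_biSup_abs hA_bdd (hyA n))

/-- The convex hull of the solid hull of a weak L-weakly compact set is weak L-weakly
compact. -/
theorem stmt2 {E : Type*} [NormedAddCommGroup E] [Lattice E] [HasSolidNorm E] [IsOrderedAddMonoid E] [NormedSpace ℝ E] [CompleteSpace E] {E' : Type*} [NormedAddCommGroup E'] [Lattice E'] [HasSolidNorm E'] [IsOrderedAddMonoid E'] [NormedSpace ℝ E'] [CompleteSpace E']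
    (P : DualPairing E E') (A : Set E) (hA : WeakLWCSet P A) :
    WeakLWCSet P (convexHull ℝ (SolidHull A)) :=
  stmt2_general P A hA
end
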